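/- Let R be a commutative ring, m a natural number, u_i = ι(i) ∈ FreeAlgebra R (Fin m) the generators of the free (tensor) algebra on m generators, and C = (c_{ij}) an m × m matrix over R that is alternating (c_{ij} = -c_{ji} for all i, j and c_{ii} = 0 for all i). Set χ = Σ_{i<j} c_{ij}(u_i u_j - u_j u_i). Then for every y ∈ FreeAlgebra R (Fin m), the element Σ_{i,j} c_{ij} ⁅u_j, ⁅u_i, y⁆⁆ lies in the two-sided ideal of FreeAlgebra R (Fin m) generated by χ; equivalently, its image in the quotient algebra U = FreeAlgebra R (Fin m)/(χ) is zero. -/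

import Mathlib

/-!
Since `C` is alternating, `χ = ∑_{i,j} c_{ij} u_i u_j`. Expanding the double commutators, the
cross terms `u_j y u_i` and `u_i y u_j` cancel against each other after exchanging `i` and `j`,
and what remains is `y χ - χ y = ⁅y, χ⁆`, which lies in every two-sided ideal containing `χ`.
-/

open Finset

section Alternating

variable {R M ι : Type*} [Ring R] [AddCommGroup M] [Module R M] [Fintype ι]
  {C : Matrix ι ι R}

theorem sum_sum_smul_swap_of_antisymm (hAlt : ∀ i j, C i j = -C j i) (f : ι → ι → M) :
    ∑ i, ∑ j, C i j • f j i = -∑ i, ∑ j, C i j • f i j := by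
  rw [sum_comm]
  simp only [← sum_neg_distrib, ← neg_smul, ← hAlt]

theorem sum_sum_Ioi_smul_sub_eq_of_alternating [LinearOrder ι] [LocallyFiniteOrderTop ι]
    [LocallyFiniteOrderBot ι] (hAlt : ∀ i j, C i j = -C j i) (hDiag : ∀ i, C i i = 0)
    (f : ι → ι → M) :
    ∑ i, ∑ j ∈ Ioi i, C i j • (f i j - f j i) = ∑ i, ∑ j, C i j • f i j := by
  have hsplit : ∀ i j, C i j • (f i j - f j i) = C i j • f i j + C j i • f j i := by
    intro i j
    rw [smul_sub, sub_eq_add_neg, ← neg_smul, ← hAlt]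
  simp_rw [hsplit]
  rw [sum_sum_Ioi_add_eq_sum_sum_off_diag fun p q => C q p • f q p]
  refine sum_congr rfl fun i _ => ?_
  rw [← sum_compl_add_sum {i}, sum_singleton, hDiag, zero_smul, add_zero]

end Alternating

theorem sum_sum_smul_lie_lie_eq_of_antisymm {R A ι : Type*} [CommRing R] [Ring A] [Algebra R A]
    [Fintype ι] {C : Matrix ι ι R} (hAlt : ∀ i j, C i j = -C j i) (u : ι → A) (y : A) :
    ∑ i, ∑ j, C i j • ⁅u j, ⁅u i, y⁆⁆ = ⁅y, ∑ i, ∑ j, C i j • (u i * u j)⁆ := by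
  have expand : ∑ i, ∑ j, C i j • ⁅u j, ⁅u i, y⁆⁆
      = ∑ i, ∑ j, C i j • (u j * u i * y) - ∑ i, ∑ j, C i j • (u j * y * u i)
        - (∑ i, ∑ j, C i j • (u i * y * u j) - ∑ i, ∑ j, C i j • (y * (u i * u j))) := by
    simp only [Ring.lie_def, mul_sub, sub_mul, smul_sub, sum_sub_distrib, mul_assoc]
  rw [expand, sum_sum_smul_swap_of_antisymm hAlt (fun i j => u i * u j * y),
    sum_sum_smul_swap_of_antisymm hAlt (fun i j => u i * y * u j), Ring.lie_def]
  simp only [mul_sum, sum_mul, mul_smul_comm, smul_mul_assoc, mul_assoc]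
  abel

theorem TwoSidedIdeal.lie_mem_span_singleton {A : Type*} [Ring A] (x y : A) :
    ⁅y, x⁆ ∈ TwoSidedIdeal.span {x} := by
  have hx : x ∈ TwoSidedIdeal.span {x} := TwoSidedIdeal.subset_span (Set.mem_singleton x)
  rw [Ring.lie_def]
  exact TwoSidedIdeal.sub_mem _ (TwoSidedIdeal.mul_mem_left _ _ _ hx)
    (TwoSidedIdeal.mul_mem_right _ _ _ hx)

theorem stmt1_general (R : Type*) [CommRing R] (m : ℕ)
    (C : Matrix (Fin m) (Fin m) R)
    (hAlt : ∀ i j, C i j = - C j i) (hDiag : ∀ i, C i i = 0)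
    (u : Fin m → FreeAlgebra R (Fin m))
    (χ : FreeAlgebra R (Fin m))
    (hχ : χ = ∑ i : Fin m, ∑ j ∈ Finset.Ioi i, C i j • (u i * u j - u j * u i))
    (y : FreeAlgebra R (Fin m)) :
    (∑ i : Fin m, ∑ j : Fin m, C i j • ⁅u j, ⁅u i, y⁆⁆) ∈
      TwoSidedIdeal.span {χ} := by
  rw [sum_sum_smul_lie_lie_eq_of_antisymm hAlt,
    ← sum_sum_Ioi_smul_sub_eq_of_alternating hAlt hDiag (fun i j => u i * u j), ← hχ]
  exact TwoSidedIdeal.lie_mem_span_singleton χ y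

/-- In the free tensor algebra `T(V) = FreeAlgebra R (Fin m)`, with `C` an alternating
matrix and `χ = ∑_{i<j} c_{ij}(u_i u_j - u_j u_i)`, the element
`∑_{i,j} c_{ij} ⁅u_j, ⁅u_i, y⁆⁆` lies in the two-sided ideal generated by `χ`
(equivalently its image in `U = T(V)/(χ)` is zero). -/
theorem stmt1 (R : Type*) [CommRing R] (m : ℕ)
    (C : Matrix (Fin m) (Fin m) R)
    (hAlt : ∀ i j, C i j = - C j i) (hDiag : ∀ i, C i i = 0)
    (u : Fin m → FreeAlgebra R (Fin m)) (hu : ∀ i, u i = FreeAlgebra.ι R i)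
    (χ : FreeAlgebra R (Fin m))
    (hχ : χ = ∑ i : Fin m, ∑ j ∈ Finset.Ioi i, C i j • (u i * u j - u j * u i))
    (y : FreeAlgebra R (Fin m)) :
    (∑ i : Fin m, ∑ j : Fin m, C i j • ⁅u j, ⁅u i, y⁆⁆) ∈
      TwoSidedIdeal.span {χ} :=
  stmt1_general R m C hAlt hDiag u χ hχ y
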